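/- The Baldwin voting method violates positive involvement: there exists a profile P, a candidate x ∈ Baldwin(P), and a profile P' obtained from P by adding one new voter whose ballot ranks x in first place, such that x ∉ Baldwin(P'). (A witness: P is the 6-voter profile on candidates {a,b,c,d} with ballots badc, cbda, cbda, dacb, dbac, acbd, in which Baldwin(P) = {c}; adding a voter with ballot cabd yields Baldwin(P') = {a}.) -/

import Mathlib

open scoped Classical

/-- `r` is a strict linear order on the finite set `X`, relating only members of `X`. -/
def IsLinOn (X : Finset ℕ) (r : ℕ → ℕ → Prop) : Prop :=
  (∀ a b, r a b → a ∈ X ∧ b ∈ X) ∧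
  (∀ a, ¬ r a a) ∧
  (∀ a b c, r a b → r b c → r a c) ∧
  (∀ a ∈ X, ∀ b ∈ X, a ≠ b → r a b ∨ r b a)

/-- A profile assigns to each voter in a nonempty finite set of voters a strict linear
order (ballot) on a nonempty finite set of candidates.  Voters and candidates are both
drawn from the infinite set `ℕ`. -/
structure Profile where
  voters : Finset ℕ
  cands : Finset ℕ
  voters_nonempty : voters.Nonempty
  cands_nonempty : cands.Nonempty
  ballot : ℕ → ℕ → ℕ → Prop
  ballot_lin : ∀ i ∈ voters, IsLinOn cands (ballot i)

/-- `F` is a voting method: it assigns to each profile a nonempty set of winners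
among the candidates of the profile. -/
def VotingMethod (F : Profile → Finset ℕ) : Prop :=
  ∀ P : Profile, (F P).Nonempty ∧ F P ⊆ P.cands

/-- The ballot `r` ranks `x` in first place among the candidates in `X`. -/
def RanksFirst (X : Finset ℕ) (r : ℕ → ℕ → Prop) (x : ℕ) : Prop :=
  x ∈ X ∧ ∀ y ∈ X, y ≠ x → r x y

/-- `P'` is obtained from `P` by adding one new voter `j` whose ballot ranks `x` in
first place. -/
def AddVoter (P P' : Profile) (j x : ℕ) : Prop :=
  P'.cands = P.cands ∧ j ∉ P.voters ∧ P'.voters = insert j P.voters ∧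
  (∀ i ∈ P.voters, ∀ a b, (P'.ballot i a b ↔ P.ballot i a b)) ∧
  RanksFirst P.cands (P'.ballot j) x

/-- `F` satisfies positive involvement (PI). -/
def SatisfiesPI (F : Profile → Finset ℕ) : Prop :=
  ∀ (P P' : Profile) (j x : ℕ), x ∈ F P → AddVoter P P' j x → x ∈ F P'

/-- The Borda score of `x` in the profile `P` restricted to the candidates in `Y`
(for each ballot, the number of candidates in `Y` ranked below `x`, which equals
`|Y| - Rank(x)`). -/
noncomputable def bordaInY (P : Profile) (Y : Finset ℕ) (x : ℕ) : ℕ :=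
  ∑ i ∈ P.voters, (Y.filter (fun b => P.ballot i x b)).card

/-- The `n`-th stage of the Baldwin elimination process: while more than one candidate
remains, remove all remaining candidates with the smallest Borda score (computed in the
restricted profile), unless all remaining candidates are tied (in which case stop). -/
noncomputable def baldwinStage (P : Profile) : ℕ → Finset ℕ
  | 0 => P.cands
  | n + 1 =>
    let Y := baldwinStage P n
    if Y.card ≤ 1 then Y
    else
      let L := Y.filter (fun x => ∀ y ∈ Y, bordaInY P Y x ≤ bordaInY P Y y)
      if L = Y then Y else Y \ L

/-- The Baldwin winners (the elimination process stabilizes after at most `|X(P)|` stages). -/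
noncomputable def Baldwin (P : Profile) : Finset ℕ := baldwinStage P P.cands.card

/-! Candidates `a, b, c, d` are encoded as `0, 1, 2, 3`. In `P` Baldwin eliminates `a`, then `d`,
then `b`, so `c` wins. The extra ballot `cabd` lifts the Borda score of `a` (8 in `P`) above
that of `d` (9), and in `P'` the eliminations are `d`, then `b`, then `c`, so `a` wins. -/

def listBallot (l : List ℕ) (a b : ℕ) : Prop :=
  a ∈ l ∧ b ∈ l ∧ l.idxOf a < l.idxOf b

instance (l : List ℕ) : DecidableRel (listBallot l) :=
  fun _ _ => inferInstanceAs (Decidable (_ ∧ _ ∧ _))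

theorem isLinOn_listBallot {X : Finset ℕ} {l : List ℕ} (hX : ∀ a, a ∈ X ↔ a ∈ l) :
    IsLinOn X (listBallot l) := by
  refine ⟨fun a b hab => ⟨(hX a).2 hab.1, (hX b).2 hab.2.1⟩,
    fun a ha => lt_irrefl _ ha.2.2,
    fun a b c hab hbc => ⟨hab.1, hbc.2.1, hab.2.2.trans hbc.2.2⟩,
    fun a ha b hb hab => ?_⟩
  rw [hX] at ha hb
  rcases lt_trichotomy (l.idxOf a) (l.idxOf b) with hlt | heq | hgt
  · exact Or.inl ⟨ha, hb, hlt⟩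
  · exact absurd ((List.idxOf_inj ha).1 heq) hab
  · exact Or.inr ⟨hb, ha, hgt⟩

theorem ranksFirst_listBallot_cons {X : Finset ℕ} {x : ℕ} {l : List ℕ}
    (hX : ∀ a, a ∈ X ↔ a ∈ x :: l) : RanksFirst X (listBallot (x :: l)) x := by
  refine ⟨(hX x).2 List.mem_cons_self, fun y hy hyx => ⟨List.mem_cons_self, (hX y).1 hy, ?_⟩⟩
  rw [List.idxOf_cons_self, List.idxOf_cons_ne _ (Ne.symm hyx)]
  exact Nat.succ_pos _

def Profile.ofBallots (V X : Finset ℕ) (hV : V.Nonempty) (hX : X.Nonempty)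
    (ballots : ℕ → List ℕ) (hballots : ∀ i, ∀ a, a ∈ X ↔ a ∈ ballots i) : Profile where
  voters := V
  cands := X
  voters_nonempty := hV
  cands_nonempty := hX
  ballot i := listBallot (ballots i)
  ballot_lin i _ := isLinOn_listBallot (hballots i)

theorem addVoter_ofBallots {V X : Finset ℕ} {hV : V.Nonempty} {hX : X.Nonempty}
    {ballots : ℕ → List ℕ} {hballots : ∀ i, ∀ a, a ∈ X ↔ a ∈ ballots i} {j x : ℕ} {l : List ℕ}
    (hj : j ∉ V) (hjx : ballots j = x :: l) :
    AddVoter (Profile.ofBallots V X hV hX ballots hballots)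
      (Profile.ofBallots (insert j V) X (Finset.insert_nonempty j V) hX ballots hballots) j x :=
  ⟨rfl, hj, rfl, fun _ _ _ _ => Iff.rfl, by
    simpa only [Profile.ofBallots, hjx] using ranksFirst_listBallot_cons (hjx ▸ hballots j)⟩

/-- `score Y x` is the score of `x` in the profile restricted to `Y`. -/
def baldwinStep (score : Finset ℕ → ℕ → ℕ) (Y : Finset ℕ) : Finset ℕ :=
  if Y.card ≤ 1 then Y
  else
    let L := Y.filter (fun x => ∀ y ∈ Y, score Y x ≤ score Y y)
    if L = Y then Y else Y \ L

theorem baldwinStage_eq_iterate (P : Profile) (n : ℕ) :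
    baldwinStage P n = (baldwinStep (bordaInY P))^[n] P.cands := by
  induction n with
  | zero => rfl
  | succ n ih => rw [Function.iterate_succ_apply', ← ih]; rfl

theorem baldwin_eq_iterate (P : Profile) :
    Baldwin P = (baldwinStep (bordaInY P))^[P.cands.card] P.cands :=
  baldwinStage_eq_iterate P _

def listBorda (V : Finset ℕ) (ballots : ℕ → List ℕ) (Y : Finset ℕ) (x : ℕ) : ℕ :=
  ∑ i ∈ V, (Y.filter (listBallot (ballots i) x)).card

theorem bordaInY_ofBallots (V X : Finset ℕ) (hV : V.Nonempty) (hX : X.Nonempty)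
    (ballots : ℕ → List ℕ) (hballots : ∀ i, ∀ a, a ∈ X ↔ a ∈ ballots i) :
    bordaInY (Profile.ofBallots V X hV hX ballots hballots) = listBorda V ballots := by
  ext Y x
  exact Finset.sum_congr rfl fun i _ => by congr

theorem baldwin_ofBallots (V X : Finset ℕ) (hV : V.Nonempty) (hX : X.Nonempty)
    (ballots : ℕ → List ℕ) (hballots : ∀ i, ∀ a, a ∈ X ↔ a ∈ ballots i) :
    Baldwin (Profile.ofBallots V X hV hX ballots hballots) =
      (baldwinStep (listBorda V ballots))^[X.card] X := by
  rw [baldwin_eq_iterate, bordaInY_ofBallots]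
  rfl

/-- Voters `0, …, 5` cast `badc, cbda, cbda, dacb, dbac, acbd`; the new voter `6` casts `cabd`. -/
def witnessBallots : ℕ → List ℕ
  | 0 => [1, 0, 3, 2]
  | 1 => [2, 1, 3, 0]
  | 2 => [2, 1, 3, 0]
  | 3 => [3, 0, 2, 1]
  | 4 => [3, 1, 0, 2]
  | 5 => [0, 2, 1, 3]
  | _ => [2, 0, 1, 3]

theorem mem_witnessBallots_iff (i a : ℕ) :
    a ∈ ({0, 1, 2, 3} : Finset ℕ) ↔ a ∈ witnessBallots i := by
  rcases i with _ | _ | _ | _ | _ | _ | _ <;> simp [witnessBallots] <;> omega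

def witnessProfile (V : Finset ℕ) (hV : V.Nonempty) : Profile :=
  Profile.ofBallots V {0, 1, 2, 3} hV (by decide) witnessBallots mem_witnessBallots_iff

theorem baldwin_witnessProfile_before :
    Baldwin (witnessProfile {0, 1, 2, 3, 4, 5} (by decide)) = {2} := by
  rw [witnessProfile, baldwin_ofBallots]
  decide

theorem baldwin_witnessProfile_after :
    Baldwin (witnessProfile {6, 0, 1, 2, 3, 4, 5} (by decide)) = {0} := by
  rw [witnessProfile, baldwin_ofBallots]
  decide

theorem baldwin_violates_PI :
    ∃ (P P' : Profile) (j x : ℕ),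
      x ∈ Baldwin P ∧ AddVoter P P' j x ∧ x ∉ Baldwin P' :=
  ⟨witnessProfile {0, 1, 2, 3, 4, 5} (by decide), witnessProfile {6, 0, 1, 2, 3, 4, 5} (by decide),
    6, 2, by simp [baldwin_witnessProfile_before], addVoter_ofBallots (by decide) rfl,
    by simp [baldwin_witnessProfile_after]⟩
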